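/- Let x_1, \ldots, x_n be T-pairs (positive or negative) for a Belavin-Drinfeld triple, and suppose the matrix product E_{x_1} \cdots E_{x_n} is nonzero. Then it equals E_z for a unique z \in \bar\Gamma \times \bar\Gamma, namely the componentwise sum of all the x_i; in particular, the componentwise sum is never (0,0), so the product is never of the form e_{ii} \otimes e_{jj}. -/

import Mathlib

/-- Adjacency of simple roots `α_i`, `α_j` of `sl(n)` (equivalent to
`(α_i, α_j) = -1`): the indices differ by one. -/
def Adj (i j : ℕ) : Prop := i + 1 = j ∨ j + 1 = i

/-- One application of the additive extension of `T` to positive roots.  A positive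
root `e_i - e_j` (`i < j`) is encoded as the pair `(i, j)`; its simple-root support is
`Finset.Ico i j`.  `TStep T Γ1 α β` says that all simple constituents of `α` lie in
`Γ1` and that `T` maps the support of `α` onto the support of `β` (possibly reversing
orientation), i.e. `T α = β`. -/
def TStep (T : ℕ → ℕ) (Γ1 : Finset ℕ) (α β : ℕ × ℕ) : Prop :=
  α.1 < α.2 ∧ β.1 < β.2 ∧ Finset.Ico α.1 α.2 ⊆ Γ1 ∧
    Finset.image T (Finset.Ico α.1 α.2) = Finset.Ico β.1 β.2

/-- `TIter T Γ1 k α β` says `T^k α = β` for positive roots `α`, `β`. -/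
def TIter (T : ℕ → ℕ) (Γ1 : Finset ℕ) : ℕ → ℕ × ℕ → ℕ × ℕ → Prop
  | 0, α, β => α = β
  | k + 1, α, β => ∃ γ, TStep T Γ1 α γ ∧ TIter T Γ1 k γ β

/-- A Belavin–Drinfeld triple of type `A_{n-1}`: `Γ1, Γ2` are subsets of the simple
roots `{1, …, n-1}` of `sl(n)`, `T` restricts to a bijection `Γ1 → Γ2` preserving the
inner product (equivalently, preserving adjacency), and `T` is nilpotent. -/
def BDTriple (n : ℕ) (Γ1 Γ2 : Finset ℕ) (T : ℕ → ℕ) : Prop :=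
  Γ1 ⊆ Finset.Ico 1 n ∧ Γ2 ⊆ Finset.Ico 1 n ∧
    Set.BijOn T ↑Γ1 ↑Γ2 ∧
    (∀ i ∈ Γ1, ∀ j ∈ Γ1, (Adj (T i) (T j) ↔ Adj i j)) ∧
    (∀ i ∈ Γ1, ∃ k, 1 ≤ k ∧ T^[k] i ∉ Γ1)

open Matrix Kronecker

/-- A `T`-pair for a Belavin–Drinfeld triple: the data of a positive root `α` (with
`1 ≤ α.1 < α.2 ≤ n`) and `β = T^k α`.  If `pos = true` this encodes the positive
`T`-pair `(T^k α, -α)` (requiring `k > 0`); if `pos = false` it encodes the negative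
`T`-pair `(-α, T^k α)` (allowing `k = 0`).  `Ord = k` and the size is `|α| = α.2 - α.1`. -/
structure TPair (n : ℕ) (T : ℕ → ℕ) (Γ1 : Finset ℕ) where
  pos : Bool
  k : ℕ
  α : ℕ × ℕ
  β : ℕ × ℕ
  hα : α.1 < α.2
  hlo : 1 ≤ α.1 ∧ 1 ≤ β.1
  hhi : α.2 ≤ n ∧ β.2 ≤ n
  hiter : TIter T Γ1 k α β
  hpos : pos = true → 0 < k

open Fin.NatCast in
/-- The elementary matrix `e_{e_i - e_j} = e_{ij}` attached to a root `e_i - e_j`,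
encoded as the pair `(i, j)` with `1 ≤ i, j ≤ n` (indices taken in `Fin (n+1)`). -/
noncomputable def Eroot (n : ℕ) (p : ℕ × ℕ) : Matrix (Fin (n + 1)) (Fin (n + 1)) ℂ :=
  single (p.1 : Fin (n + 1)) (p.2 : Fin (n + 1)) 1

/-- The elementary tensor `E_x` attached to a `T`-pair `x`: for a positive pair
`(β, -α)` it is `e_β ⊗ e_{-α}`, and for a negative pair `(-α, β)` it is
`e_{-α} ⊗ e_β`, where `e_{-(e_i - e_j)} = e_{ji}`. -/
noncomputable def Epair {n : ℕ} {T : ℕ → ℕ} {Γ1 : Finset ℕ} (x : TPair n T Γ1) :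
    Matrix (Fin (n + 1) × Fin (n + 1)) (Fin (n + 1) × Fin (n + 1)) ℂ :=
  if x.pos then Eroot n x.β ⊗ₖ Eroot n (x.α.2, x.α.1)
  else Eroot n (x.α.2, x.α.1) ⊗ₖ Eroot n x.β

/-- First component of a `T`-pair, as a (possibly negative) root `e_{p.1} - e_{p.2}`. -/
def comp1 {n : ℕ} {T : ℕ → ℕ} {Γ1 : Finset ℕ} (x : TPair n T Γ1) : ℕ × ℕ :=
  if x.pos then x.β else (x.α.2, x.α.1)

/-- Second component of a `T`-pair, as a (possibly negative) root `e_{p.1} - e_{p.2}`. -/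
def comp2 {n : ℕ} {T : ℕ → ℕ} {Γ1 : Finset ℕ} (x : TPair n T Γ1) : ℕ × ℕ :=
  if x.pos then (x.α.2, x.α.1) else x.β

/-!
Each `T`-pair `x = (x₁, x₂)` is a step from the vertex `src x` (the two left endpoints) to the
vertex `tgt x` (the two right endpoints), and a product of elementary tensors is nonzero only if
these steps form a path; the product is then `E_z` with `z` given by the ends of the path. The
sizes of `x₁` and `x₂` cancel, so the sum of the two coordinates of a vertex is constant along
the path. Nilpotency of `T` yields a rank `N` with `N (T s) < N s` on `Γ₁`. Weighting each simple
root `s` by `N s`, the pair (total weight of the simple roots below the two coordinates of a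
vertex, its first coordinate) strictly decreases lexicographically along every `T`-pair: for `(T^k α, -α)` the weight drops by at least `k > 0`,
and for `(-α, T^k α)` it drops unless `k = 0`, in which case the first coordinate drops. Hence
the path cannot be closed in either coordinate.
-/

open Finset

theorem Matrix.prod_ofFn_single_of_ne_zero {I R : Type*} [DecidableEq I] [Fintype I]
    [Semiring R] : ∀ {m : ℕ} {a b : Fin (m + 1) → I},
    (List.ofFn fun i => single (a i) (b i) (1 : R)).prod ≠ 0 →
      (∀ i : Fin m, b i.castSucc = a i.succ) ∧
        (List.ofFn fun i => single (a i) (b i) (1 : R)).prod = single (a 0) (b (Fin.last m)) 1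
  | 0, a, b, _ => ⟨fun i => i.elim0, by simp⟩
  | m + 1, a, b, hne => by
    rw [List.ofFn_succ, List.prod_cons] at hne ⊢
    obtain ⟨hchain, hprod⟩ := prod_ofFn_single_of_ne_zero (right_ne_zero_of_mul hne)
    rw [hprod] at hne ⊢
    have hlink : b 0 = a (Fin.succ 0) := by
      by_contra h
      exact hne (single_mul_single_of_ne (h := h) ..)
    refine ⟨Fin.cases hlink hchain, ?_⟩
    rw [hlink, single_mul_single_same, one_mul]
    rfl

theorem Matrix.single_one_inj {I J R : Type*} [DecidableEq I] [DecidableEq J] [Semiring R]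
    [Nontrivial R] {i i' : I} {j j' : J} :
    single i j (1 : R) = single i' j' 1 ↔ i = i' ∧ j = j' := by
  refine ⟨fun h => ?_, fun ⟨hi, hj⟩ => hi ▸ hj ▸ rfl⟩
  by_contra hne
  have h1 : single i j (1 : R) i' j' = 1 := by rw [h, single_apply_same]
  exact one_ne_zero (h1.symm.trans (single_apply_of_ne _ _ _ _ _ hne))

theorem rel_first_last_of_chain {α : Type*} {R : α → α → Prop}
    (hR : ∀ {a b c}, R a b → R b c → R a c)
    {m : ℕ} {s t : Fin (m + 1) → α} (hchain : ∀ i : Fin m, t i.castSucc = s i.succ)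
    (hst : ∀ i, R (s i) (t i)) : R (s 0) (t (Fin.last m)) := by
  suffices ∀ j, R (s 0) (t j) from this _
  intro j
  induction j using Fin.induction with
  | zero => exact hst 0
  | succ i ih => exact hR ih (hchain i ▸ hst i.succ)

noncomputable def depth (T : ℕ → ℕ) (Γ1 : Finset ℕ) (s : ℕ) : ℕ :=
  sInf {k | T^[k] s ∉ Γ1}

section Rank

variable {T : ℕ → ℕ} {Γ1 : Finset ℕ}

theorem depth_apply_lt {s : ℕ} (hs : s ∈ Γ1) (hex : ∃ k, T^[k] s ∉ Γ1) :
    depth T Γ1 (T s) < depth T Γ1 s := by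
  have hmem : T^[depth T Γ1 s] s ∉ Γ1 := Nat.sInf_mem hex
  obtain ⟨k, hk⟩ : ∃ k, depth T Γ1 s = k + 1 :=
    Nat.exists_eq_add_one_of_ne_zero fun h => hmem (h ▸ hs)
  rw [hk, Function.iterate_succ_apply] at hmem
  exact hk ▸ Nat.lt_succ_of_le (Nat.sInf_le hmem)

variable {N : ℕ → ℕ} {α β : ℕ × ℕ}

theorem TStep.size_eq (hinj : Set.InjOn T Γ1) (h : TStep T Γ1 α β) :
    β.2 - β.1 = α.2 - α.1 := by
  obtain ⟨-, -, hsub, himg⟩ := h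
  rw [← Nat.card_Ico, ← Nat.card_Ico, ← himg, card_image_of_injOn (hinj.mono hsub)]

theorem TStep.sum_lt (hinj : Set.InjOn T Γ1) (hN : ∀ s ∈ Γ1, N (T s) < N s)
    (h : TStep T Γ1 α β) : ∑ s ∈ Ico β.1 β.2, N s < ∑ s ∈ Ico α.1 α.2, N s := by
  obtain ⟨hα, -, hsub, himg⟩ := h
  rw [← himg, sum_image (hinj.mono hsub)]
  exact sum_lt_sum_of_nonempty (nonempty_Ico.mpr hα) fun s hs => hN s (hsub hs)

theorem TIter.fst_lt_snd :
    ∀ {k : ℕ} {α β : ℕ × ℕ}, TIter T Γ1 k α β → α.1 < α.2 → β.1 < β.2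
  | 0, _, _, rfl, h => h
  | _ + 1, _, _, ⟨_, hstep, hiter⟩, _ => hiter.fst_lt_snd hstep.2.1

theorem TIter.size_eq (hinj : Set.InjOn T Γ1) :
    ∀ {k : ℕ} {α β : ℕ × ℕ}, TIter T Γ1 k α β → β.2 - β.1 = α.2 - α.1
  | 0, _, _, rfl => rfl
  | _ + 1, _, _, ⟨_, hstep, hiter⟩ => (hiter.size_eq hinj).trans (hstep.size_eq hinj)

theorem TIter.sum_add_le (hinj : Set.InjOn T Γ1) (hN : ∀ s ∈ Γ1, N (T s) < N s) :
    ∀ {k : ℕ} {α β : ℕ × ℕ}, TIter T Γ1 k α β →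
      ∑ s ∈ Ico β.1 β.2, N s + k ≤ ∑ s ∈ Ico α.1 α.2, N s
  | 0, _, _, rfl => le_rfl
  | _ + 1, _, _, ⟨_, hstep, hiter⟩ => by
    have := hiter.sum_add_le hinj hN
    have := hstep.sum_lt hinj hN
    omega

end Rank

def potential (N : ℕ → ℕ) (v : ℕ × ℕ) : ℕ ×ₗ ℕ :=
  toLex (∑ s ∈ range v.1, N s + ∑ s ∈ range v.2, N s, v.1)

open Fin.NatCast in
def toFinPair (n : ℕ) (v : ℕ × ℕ) : Fin (n + 1) × Fin (n + 1) := (v.1, v.2)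

theorem toFinPair_injOn (n : ℕ) : Set.InjOn (toFinPair n) (Set.Iic (n, n)) := by
  intro v hv w hw h
  simp only [toFinPair, Prod.mk.injEq, Fin.ext_iff] at h
  rw [Fin.val_cast_of_lt (Nat.lt_succ_of_le hv.1), Fin.val_cast_of_lt (Nat.lt_succ_of_le hv.2),
    Fin.val_cast_of_lt (Nat.lt_succ_of_le hw.1), Fin.val_cast_of_lt (Nat.lt_succ_of_le hw.2)] at h
  exact Prod.ext h.1 h.2

theorem Eroot_kronecker_Eroot (n : ℕ) (p q : ℕ × ℕ) :
    Eroot n p ⊗ₖ Eroot n q = single (toFinPair n (p.1, q.1)) (toFinPair n (p.2, q.2)) 1 := by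
  rw [Eroot, Eroot, single_kronecker_single, mul_one]
  rfl

theorem Eroot_kronecker_Eroot_inj {n : ℕ} {p q p' q' : ℕ × ℕ}
    (h : Eroot n p ⊗ₖ Eroot n q = Eroot n p' ⊗ₖ Eroot n q')
    (hp : p ≤ (n, n)) (hq : q ≤ (n, n)) (hp' : p' ≤ (n, n)) (hq' : q' ≤ (n, n)) :
    p = p' ∧ q = q' := by
  rw [Eroot_kronecker_Eroot, Eroot_kronecker_Eroot] at h
  obtain ⟨h1, h2⟩ := single_one_inj.mp h
  have e1 : (p.1, q.1) = (p'.1, q'.1) :=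
    toFinPair_injOn n (Prod.mk_le_mk.2 ⟨hp.1, hq.1⟩) (Prod.mk_le_mk.2 ⟨hp'.1, hq'.1⟩) h1
  have e2 : (p.2, q.2) = (p'.2, q'.2) :=
    toFinPair_injOn n (Prod.mk_le_mk.2 ⟨hp.2, hq.2⟩) (Prod.mk_le_mk.2 ⟨hp'.2, hq'.2⟩) h2
  simp only [Prod.mk.injEq] at e1 e2
  exact ⟨Prod.ext e1.1 e2.1, Prod.ext e1.2 e2.2⟩

namespace TPair

variable {n : ℕ} {T : ℕ → ℕ} {Γ1 : Finset ℕ} (x : TPair n T Γ1)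

theorem β_fst_lt_snd : x.β.1 < x.β.2 :=
  x.hiter.fst_lt_snd x.hα

def src : ℕ × ℕ := ((comp1 x).1, (comp2 x).1)

def tgt : ℕ × ℕ := ((comp1 x).2, (comp2 x).2)

theorem Epair_eq : Epair x = single (toFinPair n x.src) (toFinPair n x.tgt) 1 := by
  rw [src, tgt, ← Eroot_kronecker_Eroot, Epair, comp1, comp2]
  split_ifs <;> rfl

theorem src_le : x.src ≤ (n, n) := by
  have := x.hα
  have := x.β_fst_lt_snd
  have := x.hhi
  constructor <;> simp only [src, comp1, comp2] <;> split_ifs <;> omega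

theorem tgt_le : x.tgt ≤ (n, n) := by
  have := x.hα
  have := x.β_fst_lt_snd
  have := x.hhi
  constructor <;> simp only [tgt, comp1, comp2] <;> split_ifs <;> omega

variable {N : ℕ → ℕ} (hinj : Set.InjOn T Γ1) (hN : ∀ s ∈ Γ1, N (T s) < N s)
include hinj

theorem tgt_sum_eq : x.tgt.1 + x.tgt.2 = x.src.1 + x.src.2 := by
  have := x.hα
  have := x.β_fst_lt_snd
  have := x.hiter.size_eq hinj
  simp only [src, tgt, comp1, comp2]
  split_ifs <;> omega

include hN

theorem potential_tgt_lt_src : potential N x.tgt < potential N x.src := by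
  have hpos := x.hpos
  have hk := x.hiter.sum_add_le hinj hN
  have hα_sum := sum_range_add_sum_Ico N x.hα.le
  have hβ_sum := sum_range_add_sum_Ico N x.β_fst_lt_snd.le
  have := x.hα
  simp only [potential, src, tgt, comp1, comp2, Prod.Lex.toLex_lt_toLex]
  split_ifs with h <;> dsimp only
  · have := hpos h
    omega
  · omega

end TPair

theorem prod_Epair_eq_of_ne_zero {n m : ℕ} {T : ℕ → ℕ} {Γ1 : Finset ℕ}
    (hinj : Set.InjOn T Γ1) (hnil : ∀ s ∈ Γ1, ∃ k, T^[k] s ∉ Γ1)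
    (x : Fin (m + 1) → TPair n T Γ1)
    (hprod : (List.ofFn fun i => Epair (x i)).prod ≠ 0) :
    let u := (x 0).src
    let v := (x (Fin.last m)).tgt
    (List.ofFn fun i => Epair (x i)).prod = Eroot n (u.1, v.1) ⊗ₖ Eroot n (u.2, v.2) ∧
      u.1 ≠ v.1 ∧ u.2 ≠ v.2 := by
  intro u v
  simp only [TPair.Epair_eq] at hprod ⊢
  obtain ⟨hchain, hprod_eq⟩ := prod_ofFn_single_of_ne_zero hprod
  have hlink (i : Fin m) : (x i.castSucc).tgt = (x i.succ).src :=
    toFinPair_injOn n (x _).tgt_le (x _).src_le (hchain i)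
  have hsum : v.1 + v.2 = u.1 + u.2 :=
    rel_first_last_of_chain (R := fun a b : ℕ × ℕ => b.1 + b.2 = a.1 + a.2)
      (fun h1 h2 => h2.trans h1) hlink fun i => (x i).tgt_sum_eq hinj
  have hlt : potential (depth T Γ1) v < potential (depth T Γ1) u :=
    rel_first_last_of_chain (R := fun a b => potential (depth T Γ1) b < potential (depth T Γ1) a)
      (fun h1 h2 => h2.trans h1) hlink
      fun i => (x i).potential_tgt_lt_src hinj fun s hs => depth_apply_lt hs (hnil s hs)
  have hne : u ≠ v := fun h => hlt.ne' (congrArg _ h)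
  rw [Ne, Prod.ext_iff] at hne
  refine ⟨?_, by omega, by omega⟩
  rwa [Eroot_kronecker_Eroot]

/-- If a product `E_{x_1} ⋯ E_{x_m}` of the elementary tensors of `T`-pairs is
nonzero, then it equals `E_z` for a unique `z ∈ Γ̄ × Γ̄`, namely the componentwise sum
of the `x_i` (given by chaining endpoints); in particular the componentwise sum is
never `(0,0)`, so the product is never of the form `e_{ii} ⊗ e_{jj}`. -/
theorem prod_of_tpairs (n m : ℕ) (hm : 0 < m) (Γ1 Γ2 : Finset ℕ) (T : ℕ → ℕ)
    (h : BDTriple n Γ1 Γ2 T) (x : Fin m → TPair n T Γ1)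
    (hprod : (List.ofFn fun i => Epair (x i)).prod ≠ 0) :
    let z1 : ℕ × ℕ := ((comp1 (x ⟨0, hm⟩)).1, (comp1 (x ⟨m - 1, Nat.sub_lt hm Nat.one_pos⟩)).2)
    let z2 : ℕ × ℕ := ((comp2 (x ⟨0, hm⟩)).1, (comp2 (x ⟨m - 1, Nat.sub_lt hm Nat.one_pos⟩)).2)
    (List.ofFn fun i => Epair (x i)).prod = Eroot n z1 ⊗ₖ Eroot n z2 ∧
      z1.1 ≠ z1.2 ∧ z2.1 ≠ z2.2 ∧
      (∀ w1 w2 : ℕ × ℕ, w1.1 ∈ Finset.Icc 1 n → w1.2 ∈ Finset.Icc 1 n →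
        w2.1 ∈ Finset.Icc 1 n → w2.2 ∈ Finset.Icc 1 n →
        (List.ofFn fun i => Epair (x i)).prod = Eroot n w1 ⊗ₖ Eroot n w2 →
        w1 = z1 ∧ w2 = z2) := by
  obtain ⟨-, -, hbij, -, hnil⟩ := h
  obtain ⟨m, rfl⟩ := Nat.exists_eq_add_one_of_ne_zero hm.ne'
  obtain ⟨hprod_eq, hne1, hne2⟩ :=
    prod_Epair_eq_of_ne_zero hbij.injOn (fun s hs => (hnil s hs).imp fun _ => And.right) x hprod
  refine ⟨hprod_eq, hne1, hne2, fun w1 w2 hw11 hw12 hw21 hw22 hw => ?_⟩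
  have hu := (x 0).src_le
  have hv := (x (Fin.last m)).tgt_le
  simp only [mem_Icc] at hw11 hw12 hw21 hw22
  exact Eroot_kronecker_Eroot_inj (hw.symm.trans hprod_eq) ⟨hw11.2, hw12.2⟩ ⟨hw21.2, hw22.2⟩
    ⟨hu.1, hv.1⟩ ⟨hu.2, hv.2⟩
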